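/- arXiv:1610.09802 — 4 statements merged into one kernel-verified Lean document; each statement's English description precedes it below -/
import Mathlib

section
/- For every γ > 0, k(γ) > 0, where k(γ) = ∫_{-d}^{d} z φ(z - γ) dz. -/
open MeasureTheory Real Filter Topology ProbabilityTheory

/-- standard normal density -/
noncomputable def stdφ (x : ℝ) : ℝ := Real.exp (-x ^ 2 / 2) / Real.sqrt (2 * Real.pi)

/-- standard normal cumulative distribution function -/
noncomputable def stdΦ (x : ℝ) : ℝ := ∫ t in Set.Iic x, stdφ t

lemma stdφ_cont : Continuous stdφ := by
  unfold stdφ; fun_prop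

lemma stdφ_lt {a b : ℝ} (h : a ^ 2 < b ^ 2) : stdφ b < stdφ a := by
  have hs : 0 < Real.sqrt (2 * Real.pi) := Real.sqrt_pos.2 (by positivity)
  unfold stdφ
  rw [div_lt_div_iff_of_pos_right hs]
  exact Real.exp_lt_exp.2 (by linarith)

theorem stmt3 (d : ℝ) (hd : 0 < d) (γ : ℝ) (hγ : 0 < γ) :
    0 < ∫ z in (-d)..d, z * stdφ (z - γ) := by
  set f : ℝ → ℝ := fun z => z * stdφ (z - γ) with hf
  have hc : Continuous f := by
    apply Continuous.mul continuous_id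
    exact stdφ_cont.comp (by fun_prop)
  have h1 : IntervalIntegrable f volume (-d) 0 := hc.intervalIntegrable _ _
  have h2 : IntervalIntegrable f volume 0 d := hc.intervalIntegrable _ _
  have hsplit : (∫ z in (-d)..d, f z) =
      (∫ z in (-d)..(0:ℝ), f z) + ∫ z in (0:ℝ)..d, f z :=
    (intervalIntegral.integral_add_adjacent_intervals h1 h2).symm
  have hneg : (∫ z in (-d)..(0:ℝ), f z) = ∫ x in (0:ℝ)..d, f (-x) := by
    rw [intervalIntegral.integral_comp_neg f]
    simp
  have hcomb : (∫ z in (-d)..d, f z) = ∫ x in (0:ℝ)..d, (f (-x) + f x) := by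
    rw [hsplit, hneg]
    exact (intervalIntegral.integral_add
      ((by fun_prop : Continuous fun x => f (-x)).intervalIntegrable _ _) h2).symm
  rw [hcomb]
  apply intervalIntegral.intervalIntegral_pos_of_pos_on
  · exact ((by fun_prop : Continuous fun x => f (-x) + f x).intervalIntegrable _ _)
  · intro x hx
    obtain ⟨hx0, hxd⟩ := hx
    have heven : stdφ (-x - γ) = stdφ (x + γ) := by
      unfold stdφ; ring_nf
    have hlt : stdφ (x + γ) < stdφ (x - γ) := stdφ_lt (by nlinarith)
    simp only [hf, heven]
    nlinarith
  · exact hd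
end

section
/- If (θ̂, γ̂) is bivariate normal with mean (θ, γ), Var(θ̂) = σ²v_θ, Var(γ̂) = 1 and Corr(θ̂, γ̂) = ρ, and θ̂_PMS = θ̂ - ρσ v_θ^{1/2} γ̂ · 1{|γ̂| ≤ d} (that is, θ̂_PMS equals θ̂ - ρσ v_θ^{1/2} γ̂ when |γ̂| ≤ d and equals θ̂ otherwise), then E[θ̂_PMS] = θ - ρσ v_θ^{1/2} k(γ), where k(γ) = ∫_{-d}^{d} z φ(z - γ) dz. -/
/-!
The bivariate normal density factors as the `N(m₁, s₁²)` density of the first coordinate times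
the conditional `N(m₂ + ρ s₂ (x - m₁)/s₁, s₂²(1 - ρ²))` density of the second, and symmetrically.
Integrating out one coordinate shows `θ̂ ~ N(θ, σ² v_θ)` and `γ̂ ~ N(γ, 1)`. The estimator is
`θ̂ - ρσ v_θ^{1/2} · γ̂ 1{γ̂ ∈ [-d, d]}`, so by linearity its mean is `θ` minus `ρσ v_θ^{1/2}` times
the first moment of `N(γ, 1)` truncated to `[-d, d]`, which is `k(γ)`.
-/

open MeasureTheory Real Filter Topology ProbabilityTheory

/-- density of the bivariate normal distribution with means `m1, m2`,
standard deviations `s1, s2` and correlation `ρ` -/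
noncomputable def bvnPdf (m1 m2 s1 s2 ρ : ℝ) (p : ℝ × ℝ) : ℝ :=
  (2 * Real.pi * s1 * s2 * Real.sqrt (1 - ρ ^ 2))⁻¹ *
    Real.exp (-(1 / (2 * (1 - ρ ^ 2))) *
      (((p.1 - m1) / s1) ^ 2 - 2 * ρ * ((p.1 - m1) / s1) * ((p.2 - m2) / s2) +
        ((p.2 - m2) / s2) ^ 2))

open scoped ENNReal

section Marginal

variable {α β : Type*} [MeasurableSpace α] [MeasurableSpace β] {μ : Measure α} {ν : Measure β}
  [SFinite μ] [SFinite ν] {f : α × β → ℝ≥0∞}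

lemma map_fst_prod_withDensity (hf : Measurable f) :
    ((μ.prod ν).withDensity f).map Prod.fst = μ.withDensity fun x => ∫⁻ y, f (x, y) ∂ν := by
  ext A hA
  rw [Measure.map_apply measurable_fst hA, withDensity_apply _ (measurable_fst hA),
    withDensity_apply _ hA, ← Set.prod_univ, ← Measure.prod_restrict, Measure.restrict_univ,
    lintegral_prod _ hf.aemeasurable]

lemma map_snd_prod_withDensity (hf : Measurable f) :
    ((μ.prod ν).withDensity f).map Prod.snd = ν.withDensity fun y => ∫⁻ x, f (x, y) ∂μ := by
  ext A hA
  rw [Measure.map_apply measurable_snd hA, withDensity_apply _ (measurable_snd hA),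
    withDensity_apply _ hA, ← Set.univ_prod, ← Measure.prod_restrict, Measure.restrict_univ,
    lintegral_prod_symm _ hf.aemeasurable]

end Marginal

lemma bvnPdf_swap (m1 m2 s1 s2 ρ x y : ℝ) :
    bvnPdf m1 m2 s1 s2 ρ (x, y) = bvnPdf m2 m1 s2 s1 ρ (y, x) := by
  unfold bvnPdf
  ring_nf

lemma continuous_bvnPdf (m1 m2 s1 s2 ρ : ℝ) : Continuous (bvnPdf m1 m2 s1 s2 ρ) := by
  unfold bvnPdf
  fun_prop

lemma bvnPdf_eq_mul {s1 s2 ρ : ℝ} (hs1 : 0 < s1) (hs2 : 0 < s2) (hρ : ρ ^ 2 < 1)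
    (m1 m2 x y : ℝ) :
    bvnPdf m1 m2 s1 s2 ρ (x, y) = gaussianPDFReal m1 (s1 ^ 2).toNNReal x *
      gaussianPDFReal (m2 + ρ * s2 * (x - m1) / s1) (s2 ^ 2 * (1 - ρ ^ 2)).toNNReal y := by
  have hr : 0 < 1 - ρ ^ 2 := by linarith
  have hπ : 0 < 2 * π := by positivity
  have hnorm : √(2 * π * s1 ^ 2) * √(2 * π * (s2 ^ 2 * (1 - ρ ^ 2))) =
      2 * π * s1 * s2 * √(1 - ρ ^ 2) := by
    rw [Real.sqrt_mul hπ.le, Real.sqrt_mul hπ.le, Real.sqrt_mul (sq_nonneg s2),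
      Real.sqrt_sq hs1.le, Real.sqrt_sq hs2.le]
    linear_combination s1 * s2 * √(1 - ρ ^ 2) * Real.mul_self_sqrt hπ.le
  have hexp : -(1 / (2 * (1 - ρ ^ 2))) *
      (((x - m1) / s1) ^ 2 - 2 * ρ * ((x - m1) / s1) * ((y - m2) / s2) + ((y - m2) / s2) ^ 2) =
      -(x - m1) ^ 2 / (2 * s1 ^ 2) +
        -(y - (m2 + ρ * s2 * (x - m1) / s1)) ^ 2 / (2 * (s2 ^ 2 * (1 - ρ ^ 2))) := by
    field_simp
    ring
  simp only [bvnPdf, gaussianPDFReal, Real.coe_toNNReal _ (by positivity : (0 : ℝ) ≤ s1 ^ 2),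
    Real.coe_toNNReal _ (by positivity : (0 : ℝ) ≤ s2 ^ 2 * (1 - ρ ^ 2)), hexp, Real.exp_add,
    ← hnorm, mul_inv]
  ring

lemma lintegral_bvnPdf_snd {s1 s2 ρ : ℝ} (hs1 : 0 < s1) (hs2 : 0 < s2) (hρ : ρ ^ 2 < 1)
    (m1 m2 x : ℝ) :
    ∫⁻ y, ENNReal.ofReal (bvnPdf m1 m2 s1 s2 ρ (x, y)) = gaussianPDF m1 (s1 ^ 2).toNNReal x := by
  have hv : (s2 ^ 2 * (1 - ρ ^ 2)).toNNReal ≠ 0 := by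
    simp only [ne_eq, Real.toNNReal_eq_zero, not_le]
    have : 0 < 1 - ρ ^ 2 := by linarith
    positivity
  simp_rw [bvnPdf_eq_mul hs1 hs2 hρ, ENNReal.ofReal_mul (gaussianPDFReal_nonneg _ _ _)]
  rw [lintegral_const_mul' _ _ ENNReal.ofReal_ne_top, lintegral_gaussianPDFReal_eq_one _ hv,
    mul_one, gaussianPDF]

lemma lintegral_bvnPdf_fst {s1 s2 ρ : ℝ} (hs1 : 0 < s1) (hs2 : 0 < s2) (hρ : ρ ^ 2 < 1)
    (m1 m2 y : ℝ) :
    ∫⁻ x, ENNReal.ofReal (bvnPdf m1 m2 s1 s2 ρ (x, y)) = gaussianPDF m2 (s2 ^ 2).toNNReal y := by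
  simp_rw [bvnPdf_swap m1 m2]
  exact lintegral_bvnPdf_snd hs2 hs1 hρ m2 m1 y

noncomputable def bvnMeasure (m1 m2 s1 s2 ρ : ℝ) : Measure (ℝ × ℝ) :=
  volume.withDensity fun p => ENNReal.ofReal (bvnPdf m1 m2 s1 s2 ρ p)

lemma hasLaw_fst_bvnMeasure {s1 s2 ρ : ℝ} (hs1 : 0 < s1) (hs2 : 0 < s2) (hρ : ρ ^ 2 < 1)
    (m1 m2 : ℝ) :
    HasLaw Prod.fst (gaussianReal m1 (s1 ^ 2).toNNReal) (bvnMeasure m1 m2 s1 s2 ρ) where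
  map_eq := by
    rw [bvnMeasure, Measure.volume_eq_prod, map_fst_prod_withDensity
      (continuous_bvnPdf m1 m2 s1 s2 ρ).measurable.ennreal_ofReal,
      gaussianReal_of_var_ne_zero _ (by simpa using hs1.ne')]
    simp_rw [lintegral_bvnPdf_snd hs1 hs2 hρ]

lemma hasLaw_snd_bvnMeasure {s1 s2 ρ : ℝ} (hs1 : 0 < s1) (hs2 : 0 < s2) (hρ : ρ ^ 2 < 1)
    (m1 m2 : ℝ) :
    HasLaw Prod.snd (gaussianReal m2 (s2 ^ 2).toNNReal) (bvnMeasure m1 m2 s1 s2 ρ) where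
  map_eq := by
    rw [bvnMeasure, Measure.volume_eq_prod, map_snd_prod_withDensity
      (continuous_bvnPdf m1 m2 s1 s2 ρ).measurable.ennreal_ofReal,
      gaussianReal_of_var_ne_zero _ (by simpa using hs2.ne')]
    simp_rw [lintegral_bvnPdf_fst hs1 hs2 hρ]

lemma gaussianPDFReal_one (m x : ℝ) : gaussianPDFReal m 1 x = stdφ (x - m) := by
  simp [gaussianPDFReal, stdφ, div_eq_inv_mul]

lemma setIntegral_Icc_id_gaussianReal_one (m : ℝ) {a b : ℝ} (hab : a ≤ b) :
    ∫ y in Set.Icc a b, y ∂gaussianReal m 1 = ∫ z in a..b, z * stdφ (z - m) := by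
  rw [← integral_indicator measurableSet_Icc,
    integral_gaussianReal_eq_integral_smul one_ne_zero,
    intervalIntegral.integral_of_le hab, ← integral_Icc_eq_integral_Ioc,
    ← integral_indicator measurableSet_Icc]
  congr with y
  by_cases hy : y ∈ Set.Icc a b <;> simp [hy, gaussianPDFReal_one, mul_comm]

theorem stmt7_general {Ω : Type*} [MeasurableSpace Ω] (P : Measure Ω)
    (θ γ σ vθ ρ d : ℝ) (hσ : 0 < σ) (hv : 0 < vθ) (hρ : ρ ∈ Set.Ioo (-1 : ℝ) 1)
    (hd : 0 < d) (θhat γhat : Ω → ℝ) (hθm : Measurable θhat) (hγm : Measurable γhat)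
    (hjoint : Measure.map (fun ω => (θhat ω, γhat ω)) P =
      (volume : Measure (ℝ × ℝ)).withDensity
        (fun p => ENNReal.ofReal (bvnPdf θ γ (σ * Real.sqrt vθ) 1 ρ p))) :
    ∫ ω, (if |γhat ω| ≤ d then θhat ω - ρ * σ * Real.sqrt vθ * γhat ω else θhat ω) ∂P =
      θ - ρ * σ * Real.sqrt vθ * ∫ z in (-d)..d, z * stdφ (z - γ) := by
  have hs : 0 < σ * √vθ := by positivity
  have hρ2 : ρ ^ 2 < 1 := by nlinarith [hρ.1, hρ.2]
  have hpair : HasLaw (fun ω => (θhat ω, γhat ω)) (bvnMeasure θ γ (σ * √vθ) 1 ρ) P :=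
    ⟨(hθm.prodMk hγm).aemeasurable, hjoint⟩
  have hθ : HasLaw θhat (gaussianReal θ ((σ * √vθ) ^ 2).toNNReal) P :=
    (hasLaw_fst_bvnMeasure hs one_pos hρ2 θ γ).comp hpair
  have hγ : HasLaw γhat (gaussianReal γ 1) P := by
    have h := (hasLaw_snd_bvnMeasure hs one_pos hρ2 θ γ).comp hpair
    rwa [one_pow, Real.toNNReal_one] at h
  set trunc : ℝ → ℝ := (Set.Icc (-d) d).indicator fun y => y
  have hθ_int : Integrable θhat P :=
    (hθ.map_eq ▸ (memLp_id_gaussianReal 1).integrable le_rfl).comp_aemeasurable hθ.aemeasurable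
  have htrunc_int : Integrable (fun ω => trunc (γhat ω)) P :=
    (hγ.map_eq ▸ ((memLp_id_gaussianReal 1).integrable le_rfl).indicator
      measurableSet_Icc).comp_aemeasurable hγ.aemeasurable
  calc _ = ∫ ω, θhat ω - ρ * σ * √vθ * trunc (γhat ω) ∂P := by
        congr with ω
        simp only [trunc, Set.indicator_apply, Set.mem_Icc, ← abs_le]
        split_ifs <;> ring
    _ = θ - ρ * σ * √vθ * ∫ z in (-d)..d, z * stdφ (z - γ) := by
        rw [integral_sub hθ_int (htrunc_int.const_mul _), integral_const_mul, hθ.integral_eq,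
          integral_id_gaussianReal, ← Function.comp_def trunc γhat,
          hγ.integral_comp (measurable_id'.indicator measurableSet_Icc).aestronglyMeasurable,
          integral_indicator measurableSet_Icc,
          setIntegral_Icc_id_gaussianReal_one γ (by linarith)]

theorem stmt7 {Ω : Type*} [MeasurableSpace Ω] (P : Measure Ω) [IsProbabilityMeasure P]
    (θ γ σ vθ ρ d : ℝ) (hσ : 0 < σ) (hv : 0 < vθ) (hρ : ρ ∈ Set.Ioo (-1 : ℝ) 1)
    (hd : 0 < d) (θhat γhat : Ω → ℝ) (hθm : Measurable θhat) (hγm : Measurable γhat)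
    (hjoint : Measure.map (fun ω => (θhat ω, γhat ω)) P =
      (volume : Measure (ℝ × ℝ)).withDensity
        (fun p => ENNReal.ofReal (bvnPdf θ γ (σ * Real.sqrt vθ) 1 ρ p))) :
    ∫ ω, (if |γhat ω| ≤ d then θhat ω - ρ * σ * Real.sqrt vθ * γhat ω else θhat ω) ∂P =
      θ - ρ * σ * Real.sqrt vθ * ∫ z in (-d)..d, z * stdφ (z - γ) :=
  stmt7_general P θ γ σ vθ ρ d hσ hv hρ hd θhat γhat hθm hγm hjoint
end

section
/- Suppose CP(γ, ρ) = ∫_{-∞}^{∞} Φ(ℓ(h, ρ), u(h, ρ); ρ(h - γ), 1 - ρ²) φ(h - γ) dh, where ℓ(h, ρ) = -c·r(h; ρ) + ρ k(h), u(h, ρ) = c·r(h; ρ) + ρ k(h), with c > 0, k odd, and r(h; ρ) even in each argument separately and positive. Then CP(-γ, ρ) = CP(γ, ρ) for every ρ. -/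
open MeasureTheory Real Filter Topology ProbabilityTheory

lemma gaussReal_neg_Icc (μ : ℝ) (v : NNReal) (a b : ℝ) :
    gaussianReal (-μ) v (Set.Icc (-b) (-a)) = gaussianReal μ v (Set.Icc a b) := by
  have h := ProbabilityTheory.gaussianReal_map_const_mul (μ := μ) (v := v) (-1)
  norm_num at h
  rw [← h, Measure.map_apply (by fun_prop) measurableSet_Icc]
  congr 1
  ext x
  simp only [Set.mem_preimage, Set.mem_Icc, neg_one_mul]
  constructor
  · rintro ⟨h1, h2⟩; exact ⟨by linarith, by linarith⟩
  · rintro ⟨h1, h2⟩; exact ⟨by linarith, by linarith⟩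

set_option maxHeartbeats 1000000 in
theorem stmt14 (c ρ : ℝ) (hc : 0 < c) (hρ : ρ ∈ Set.Ioo (-1 : ℝ) 1)
    (k : ℝ → ℝ) (hkodd : ∀ x, k (-x) = -k x) (hkcont : Continuous k)
    (r : ℝ → ℝ → ℝ) (hrpos : ∀ h ρ', 0 < r h ρ')
    (hrcont : Continuous fun p : ℝ × ℝ => r p.1 p.2)
    (hre1 : ∀ h ρ', r (-h) ρ' = r h ρ') (hre2 : ∀ h ρ', r h (-ρ') = r h ρ')
    (γ : ℝ) :
    (∫ h, (gaussianReal (ρ * (h - (-γ))) ((1 - ρ ^ 2).toNNReal)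
        (Set.Icc (-c * r h ρ + ρ * k h) (c * r h ρ + ρ * k h))).toReal *
          stdφ (h - (-γ))) =
      ∫ h, (gaussianReal (ρ * (h - γ)) ((1 - ρ ^ 2).toNNReal)
        (Set.Icc (-c * r h ρ + ρ * k h) (c * r h ρ + ρ * k h))).toReal *
          stdφ (h - γ) := by
  have key := integral_neg_eq_self (fun h => (gaussianReal (ρ * (h - γ)) ((1 - ρ ^ 2).toNNReal)
        (Set.Icc (-c * r h ρ + ρ * k h) (c * r h ρ + ρ * k h))).toReal * stdφ (h - γ)) volume
  rw [← key]
  congr 1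
  ext h
  have hφ : stdφ (h - -γ) = stdφ (-h - γ) := by
    unfold stdφ
    ring_nf
  rw [hφ]
  congr 2
  have hmean : ρ * (h - -γ) = -(ρ * (-h - γ)) := by ring
  have hlo : -c * r (-h) ρ + ρ * k (-h) = -(c * r h ρ + ρ * k h) := by
    rw [hre1, hkodd]; ring
  have hhi : c * r (-h) ρ + ρ * k (-h) = -(-c * r h ρ + ρ * k h) := by
    rw [hre1, hkodd]; ring
  rw [hmean, hlo, hhi]
  have := gaussReal_neg_Icc (ρ * (-h - γ)) ((1 - ρ ^ 2).toNNReal)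
    (-(c * r h ρ + ρ * k h)) (-(-c * r h ρ + ρ * k h))
  simpa using this
end

section
/- Under the same assumptions, CP(γ, -ρ) = CP(γ, ρ) for every γ, i.e., the coverage probability is an even function of ρ for fixed γ. -/
open MeasureTheory Real Filter Topology ProbabilityTheory

lemma gaussian_neg_Icc (μ : ℝ) (v : NNReal) (a b : ℝ) :
    gaussianReal (-μ) v (Set.Icc a b) = gaussianReal μ v (Set.Icc (-b) (-a)) := by
  have hmap : (gaussianReal μ v).map ((-1 : ℝ) * ·) = gaussianReal (-μ) v := by
    rw [gaussianReal_map_const_mul]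
    congr 1
    · ring
    · ext; simp
  rw [← hmap, Measure.map_apply (by fun_prop) measurableSet_Icc]
  congr 1
  ext x
  simp only [Set.mem_preimage, Set.mem_Icc]
  constructor <;> intro h <;> constructor <;> linarith [h.1, h.2]

theorem stmt15 (c ρ : ℝ) (hc : 0 < c) (hρ : ρ ∈ Set.Ioo (-1 : ℝ) 1)
    (k : ℝ → ℝ) (hkodd : ∀ x, k (-x) = -k x) (hkcont : Continuous k)
    (r : ℝ → ℝ → ℝ) (hrpos : ∀ h ρ', 0 < r h ρ')
    (hrcont : Continuous fun p : ℝ × ℝ => r p.1 p.2)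
    (hre1 : ∀ h ρ', r (-h) ρ' = r h ρ') (hre2 : ∀ h ρ', r h (-ρ') = r h ρ')
    (γ : ℝ) :
    (∫ h, (gaussianReal (-ρ * (h - γ)) ((1 - (-ρ) ^ 2).toNNReal)
        (Set.Icc (-c * r h (-ρ) + -ρ * k h) (c * r h (-ρ) + -ρ * k h))).toReal *
          stdφ (h - γ)) =
      ∫ h, (gaussianReal (ρ * (h - γ)) ((1 - ρ ^ 2).toNNReal)
        (Set.Icc (-c * r h ρ + ρ * k h) (c * r h ρ + ρ * k h))).toReal *
          stdφ (h - γ) := by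
  congr 1
  ext h
  rw [hre2, neg_sq, show (-ρ * (h - γ)) = -(ρ * (h - γ)) by ring, gaussian_neg_Icc]
  congr 2 <;> ring
end
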